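/- arXiv:2507.04505 — 3 statements merged into one kernel-verified Lean document; each statement's English description precedes it below -/
import Mathlib

section
/- With the recursion of the previous statement, if a binary string of length n has exactly k ones, then l_n = 2^k - 1 and r_n = 2^{n-k} - 1, hence h_n = 2^k + 2^{n-k} - 2. -/
/-- One step of the simple butterfly recursion on triples
`(height, top-left edge, top-right edge)`. -/
def butterflyStep (b : Bool) : ℕ × ℕ × ℕ → ℕ × ℕ × ℕ
  | (h, l, r) => if b then (h + l + 1, 2 * l + 1, r) else (h + r + 1, l, 2 * r + 1)

/-- The triple `(h_n, l_n, r_n)` associated to a binary string. -/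
def butterflyHLR (s : List Bool) : ℕ × ℕ × ℕ :=
  s.foldl (fun t b => butterflyStep b t) (0, 0, 0)

lemma butterflyHLR_eq (s : List Bool) :
    butterflyHLR s = (2 ^ (s.count true) + 2 ^ (s.length - s.count true) - 2,
      2 ^ (s.count true) - 1, 2 ^ (s.length - s.count true) - 1) := by
  induction s using List.reverseRecOn with
  | nil => simp [butterflyHLR]
  | append_singleton t b ih =>
    have hkn : t.count true ≤ t.length := t.count_le_length
    have h1 : (1:ℕ) ≤ 2 ^ (t.count true) := Nat.one_le_two_pow
    have h2 : (1:ℕ) ≤ 2 ^ (t.length - t.count true) := Nat.one_le_two_pow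
    have : butterflyHLR (t ++ [b]) = butterflyStep b (butterflyHLR t) := by
      simp [butterflyHLR]
    rw [this, ih]
    cases b with
    | true =>
      simp only [butterflyStep, if_true, List.count_append, List.length_append,
        List.count_singleton, List.length_singleton, beq_self_eq_true, Prod.mk.injEq]
      have e1 : t.length + 1 - (t.count true + 1) = t.length - t.count true := by omega
      rw [e1, pow_succ]
      refine ⟨by omega, by omega, rfl⟩
    | false =>
      simp only [butterflyStep, List.count_append, List.length_append,
        List.count_singleton, List.length_singleton, Prod.mk.injEq, Bool.false_eq_true,
        if_false, reduceCtorEq, if_neg, add_zero]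
      norm_num
      have e1 : t.length + 1 - t.count true = (t.length - t.count true) + 1 := by omega
      rw [e1, pow_succ]
      refine ⟨by omega, by omega⟩

/-- If the binary string has length `n` with exactly `k` ones, then
`l_n = 2^k - 1`, `r_n = 2^{n-k} - 1`, and `h_n = 2^k + 2^{n-k} - 2`. -/
theorem stmt_4 (s : List Bool) (n k : ℕ) (hn : s.length = n) (hk : s.count true = k) :
    (butterflyHLR s).2.1 = 2 ^ k - 1 ∧
    (butterflyHLR s).2.2 = 2 ^ (n - k) - 1 ∧
    (butterflyHLR s).1 = 2 ^ k + 2 ^ (n - k) - 2 := by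
  subst hn hk
  rw [butterflyHLR_eq]
  exact ⟨rfl, rfl, rfl⟩
end

section
/- The function f(x) = sqrt(2) - x/2 - sqrt(2/x)*(x-1) on (0, infinity) is strictly decreasing, and its unique zero is C* = 1 + sqrt(8*sqrt(2) - 11); hence f(x) <= 0 if and only if x >= C*. -/
lemma key_14 (x : ℝ) (hx : 0 < x) :
    Real.sqrt (2 / x) * (x - 1) = Real.sqrt 2 * Real.sqrt x - Real.sqrt 2 / Real.sqrt x := by
  have hsx : 0 < Real.sqrt x := Real.sqrt_pos.mpr hx
  rw [Real.sqrt_div (by norm_num : (0:ℝ) ≤ 2) x]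
  field_simp
  linear_combination (-1) * Real.sq_sqrt hx.le

lemma anti_14 : StrictAntiOn (fun x : ℝ => Real.sqrt 2 - x / 2 - Real.sqrt (2 / x) * (x - 1))
      (Set.Ioi 0) := by
  intro x hx y hy hxy
  simp only [Set.mem_Ioi] at hx hy
  simp only
  rw [key_14 x hx, key_14 y hy]
  have ha : 0 < Real.sqrt 2 := Real.sqrt_pos.mpr (by norm_num)
  have hsx : 0 < Real.sqrt x := Real.sqrt_pos.mpr hx
  have hsy : 0 < Real.sqrt y := Real.sqrt_pos.mpr hy
  have hlt : Real.sqrt x < Real.sqrt y := Real.sqrt_lt_sqrt hx.le hxy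
  have h1 : Real.sqrt 2 / Real.sqrt y ≤ Real.sqrt 2 / Real.sqrt x :=
    div_le_div_of_nonneg_left ha.le hsx hlt.le
  have h2 : Real.sqrt 2 * Real.sqrt x < Real.sqrt 2 * Real.sqrt y :=
    (mul_lt_mul_iff_right₀ ha).mpr hlt
  linarith

lemma tsq_14 : Real.sqrt (8 * Real.sqrt 2 - 11) ^ 2 = 8 * Real.sqrt 2 - 11 := by
  apply Real.sq_sqrt
  nlinarith [Real.sq_sqrt (by norm_num : (0:ℝ) ≤ 2), Real.sqrt_nonneg 2]

lemma zero_14 :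
    Real.sqrt 2 - (1 + Real.sqrt (8 * Real.sqrt 2 - 11)) / 2 -
      Real.sqrt (2 / (1 + Real.sqrt (8 * Real.sqrt 2 - 11))) *
        ((1 + Real.sqrt (8 * Real.sqrt 2 - 11)) - 1) = 0 := by
  set a := Real.sqrt 2 with ha'
  set t := Real.sqrt (8 * a - 11) with ht'
  have ha2 : a ^ 2 = 2 := Real.sq_sqrt (by norm_num)
  have ha : 0 < a := Real.sqrt_pos.mpr (by norm_num)
  have ht : 0 ≤ t := Real.sqrt_nonneg _
  have ht2 : t ^ 2 = 8 * a - 11 := tsq_14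
  have hC : 0 < 1 + t := by linarith
  rw [key_14 _ hC]
  set s := Real.sqrt (1 + t) with hs'
  have hs : 0 < s := Real.sqrt_pos.mpr hC
  have hs2 : s ^ 2 = 1 + t := Real.sq_sqrt hC.le
  -- key equality: s * (a - (1+t)/2) = a * t
  have hb : 0 < a - (1 + t) / 2 := by
    -- t < 2a - 1 since t^2 = 8a-11 < (2a-1)^2 = 9 - 4a (as a < 5/3... check) 
    nlinarith [ht2, ha2, ht, ha]
  have hkey : s * (a - (1 + t) / 2) = a * t := by
    have hsq : (s * (a - (1 + t) / 2)) ^ 2 = (a * t) ^ 2 := by linear_combination (a - (1 + t) / 2) ^ 2 * hs2 + ((3 + t) / 4 - a - a ^ 2) * ht2 + (4 + t - 8 * a) * ha2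
    have h1 : 0 ≤ s * (a - (1 + t) / 2) := by positivity
    have h2 : 0 ≤ a * t := by positivity
    calc s * (a - (1 + t) / 2) = Real.sqrt ((s * (a - (1 + t) / 2)) ^ 2) := (Real.sqrt_sq h1).symm
      _ = Real.sqrt ((a * t) ^ 2) := by rw [hsq]
      _ = a * t := Real.sqrt_sq h2
  field_simp
  nlinarith [hkey, hs, hs2]

/-- The function `f(x) = √2 - x/2 - √(2/x)(x-1)` is strictly decreasing on `(0,∞)`,
its unique zero is `C* = 1 + √(8√2 - 11)`, and for `x > 0` we have `f x ≤ 0 ↔ x ≥ C*`. -/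
theorem stmt_14 :
    StrictAntiOn (fun x : ℝ => Real.sqrt 2 - x / 2 - Real.sqrt (2 / x) * (x - 1))
      (Set.Ioi 0) ∧
    (Real.sqrt 2 - (1 + Real.sqrt (8 * Real.sqrt 2 - 11)) / 2 -
      Real.sqrt (2 / (1 + Real.sqrt (8 * Real.sqrt 2 - 11))) *
        ((1 + Real.sqrt (8 * Real.sqrt 2 - 11)) - 1) = 0) ∧
    (∀ x : ℝ, 0 < x →
      (Real.sqrt 2 - x / 2 - Real.sqrt (2 / x) * (x - 1) ≤ 0 ↔
        1 + Real.sqrt (8 * Real.sqrt 2 - 11) ≤ x)) := by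
  refine ⟨anti_14, zero_14, ?_⟩
  intro x hx
  set C := 1 + Real.sqrt (8 * Real.sqrt 2 - 11) with hC'
  have hC : 0 < C := by
    have := Real.sqrt_nonneg (8 * Real.sqrt 2 - 11); simp only [hC']; linarith
  have hCmem : C ∈ Set.Ioi (0:ℝ) := hC
  have hxmem : x ∈ Set.Ioi (0:ℝ) := hx
  constructor
  · intro hle
    by_contra hlt
    push_neg at hlt
    have := anti_14 hxmem hCmem hlt
    simp only at this
    rw [zero_14] at this
    linarith
  · intro hge
    rcases eq_or_lt_of_le hge with h | h
    · rw [← h]; rw [zero_14]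
    · have := anti_14 hCmem hxmem h
      simp only at this
      rw [zero_14] at this
      linarith
end

section
/- For the simple butterfly recursion on binary strings (bit 0: (l,r) -> (l, 2r+1); bit 1: (l,r) -> (2l+1, r); initial (0,0)), the product (l_n + 1)(r_n + 1) = 2^n for every binary string of length n. -/
/-- One step of the simple butterfly recursion on pairs
`(top-left edge, top-right edge)`: bit 0 ↦ `(l, 2r+1)`, bit 1 ↦ `(2l+1, r)`. -/
def butterflyLR (s : List Bool) : ℕ × ℕ :=
  s.foldl (fun t b => if b then (2 * t.1 + 1, t.2) else (t.1, 2 * t.2 + 1)) (0, 0)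

lemma butterfly_aux (s : List Bool) (t : ℕ × ℕ) :
    ((s.foldl (fun t b => if b then (2 * t.1 + 1, t.2) else (t.1, 2 * t.2 + 1)) t).1 + 1) *
    ((s.foldl (fun t b => if b then (2 * t.1 + 1, t.2) else (t.1, 2 * t.2 + 1)) t).2 + 1)
      = (t.1 + 1) * (t.2 + 1) * 2 ^ s.length := by
  induction s generalizing t with
  | nil => simp
  | cons b s ih =>
    cases b <;> simp [List.foldl_cons, ih] <;> ring

/-- For every binary string of length `n`, `(l_n + 1)(r_n + 1) = 2^n`. -/
theorem stmt_19 (s : List Bool) :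
    ((butterflyLR s).1 + 1) * ((butterflyLR s).2 + 1) = 2 ^ s.length := by
  simpa [butterflyLR] using butterfly_aux s (0, 0)
end
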